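/- arXiv:2305.09609 — 2 statements merged into one kernel-verified Lean document; each statement's English description precedes it below -/
import Mathlib

section
/- For all real numbers ξ and η and every real p ≥ 1, one has |ξ⁻ − η⁻|^p ≤ |ξ − η|^{p−2}·(ξ − η)·(η⁻ − ξ⁻), where ξ⁻ := max{0, −ξ} denotes the negative part. -/
/-!
Since `t ↦ t⁻` is antitone and 1-Lipschitz, `(ξ - η)(η⁻ - ξ⁻) = |ξ - η| |ξ⁻ - η⁻|` and
`|ξ⁻ - η⁻| ≤ |ξ - η|`; hence the right-hand side is `|ξ - η|^(p-1) |ξ⁻ - η⁻| ≥ |ξ⁻ - η⁻|^p`.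
-/

theorem Antitone.sub_mul_sub_eq_abs_mul_abs {α : Type*} [CommRing α] [LinearOrder α]
    [IsOrderedRing α] {f : α → α} (hf : Antitone f) (x y : α) :
    (x - y) * (f y - f x) = |x - y| * |f x - f y| := by
  rcases le_total x y with hxy | hyx
  · rw [abs_of_nonpos (sub_nonpos.2 hxy), abs_of_nonneg (sub_nonneg.2 (hf hxy))]
    ring
  · rw [abs_of_nonneg (sub_nonneg.2 hyx), abs_of_nonpos (sub_nonpos.2 (hf hyx))]
    ring

/-- Stated with `b ^ (p - 2) * b` rather than `b ^ (p - 1)`: the two differ at `b = 0`, `p = 1`,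
where `0 ^ 0 = 1`. -/
theorem Real.rpow_le_rpow_sub_two_mul_mul {a b p : ℝ} (hp : 1 ≤ p) (ha : 0 ≤ a) (hab : a ≤ b) :
    a ^ p ≤ b ^ (p - 2) * (b * a) := by
  obtain rfl | hb := (ha.trans hab).eq_or_lt
  · obtain rfl : a = 0 := le_antisymm hab ha
    simp [Real.zero_rpow (by linarith : p ≠ 0)]
  calc a ^ p = a ^ (p - 1) * a := by rw [← Real.rpow_add_one' ha (by linarith), sub_add_cancel]
    _ ≤ b ^ (p - 1) * a := by gcongr
    _ = b ^ (p - 2) * (b * a) := by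
      rw [← mul_assoc, ← Real.rpow_add_one hb.ne', show p - 2 + 1 = p - 1 by ring]

/-- For all real `ξ, η` and every real `p ≥ 1`,
`|ξ⁻ − η⁻|^p ≤ |ξ − η|^{p−2} (ξ − η) (η⁻ − ξ⁻)`, where `t⁻ = max 0 (−t)`
(the expression `|ξ−η|^{p−2}(ξ−η)` being `0` when `ξ = η`). -/
theorem neg_part_pointwise_ineq (p : ℝ) (hp : 1 ≤ p) (ξ η : ℝ) :
    |max 0 (-ξ) - max 0 (-η)| ^ p ≤
      |ξ - η| ^ (p - 2) * (ξ - η) * (max 0 (-η) - max 0 (-ξ)) := by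
  have hanti : Antitone fun t : ℝ => max 0 (-t) := fun _ _ h => max_le_max le_rfl (neg_le_neg h)
  have hlip : |max 0 (-ξ) - max 0 (-η)| ≤ |ξ - η| := by
    have h := abs_max_sub_max_le_abs (-ξ) (-η) 0
    rwa [max_comm (-ξ), max_comm (-η), neg_sub_neg, abs_sub_comm η] at h
  rw [mul_assoc, hanti.sub_mul_sub_eq_abs_mul_abs ξ η]
  exact Real.rpow_le_rpow_sub_two_mul_mul hp (abs_nonneg _) hlip
end

section
/- Let p > 1 and for k ≥ 1 set a_k = (2k!(k+2)!−1)/(4(k+1)!) and b_k = (2k!(k+2)!+1)/(4(k+1)!). Suppose F : [0,∞) → [0,∞) is nondecreasing, F(t) = (k+1)!^p − 2^p for all t ∈ [b_k, a_{k+1}] and all k ≥ 1. Then liminf_{t→∞} F(t)/t^p = 0 and limsup_{t→∞} F(t)/t^p = ∞. -/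
/-!
The plateau `[b_k, a_{k+1}]` ends at `a_{k+1} ≈ (k+3)(k+1)!/2`, where `F` is still below `(k+1)!^p`,
so `F(a_{k+1}) / a_{k+1}^p ≤ ((k+1)! / a_{k+1})^p ≤ (4/(k+3))^p → 0`; since `F ≥ 0`, the liminf is `0`.
-/

open Nat Filter Topology

theorem Filter.liminf_eq_zero_of_tendsto_comp {α β : Type*} {l : Filter α} {l' : Filter β}
    [l'.NeBot] {f : α → ℝ} {x : β → α} (hf : ∀ᶠ t in l, 0 ≤ f t) (hx : Tendsto x l' l)
    (hfx : Tendsto (f ∘ x) l' (𝓝 0)) : liminf f l = 0 := by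
  have hfreq : ∀ ε > 0, ∃ᶠ t in l, f t ≤ ε := fun ε hε =>
    hx.frequently (hfx.eventually (ge_mem_nhds hε)).frequently
  have hbdd : IsBoundedUnder (· ≥ ·) l f := ⟨0, eventually_map.2 hf⟩
  refine le_antisymm (le_of_forall_pos_le_add fun ε hε => ?_)
    (le_liminf_of_le (IsCoboundedUnder.of_frequently_le (hfreq 1 one_pos)) hf)
  simpa using liminf_le_of_frequently_le (hfreq ε hε) hbdd

noncomputable def plateauA (k : ℕ) : ℝ := (2 * k ! * (k + 2)! - 1) / (4 * (k + 1)!)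

noncomputable def plateauB (k : ℕ) : ℝ := (2 * k ! * (k + 2)! + 1) / (4 * (k + 1)!)

theorem plateauA_eq (k : ℕ) : plateauA k = (k + 2) * k ! / 2 - 1 / (4 * (k + 1)!) := by
  rw [plateauA, Nat.factorial_succ (k + 1)]
  push_cast
  field_simp
  ring

theorem plateauB_eq (k : ℕ) : plateauB k = (k + 2) * k ! / 2 + 1 / (4 * (k + 1)!) := by
  rw [plateauB, Nat.factorial_succ (k + 1)]
  push_cast
  field_simp
  ring

theorem one_div_four_mul_factorial_le (n : ℕ) : 1 / (4 * n ! : ℝ) ≤ 1 / 4 := by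
  gcongr
  exact le_mul_of_one_le_right (by norm_num) (mod_cast n.factorial_pos)

theorem plateauB_le_plateauA_succ (k : ℕ) : plateauB k ≤ plateauA (k + 1) := by
  have hk : (1 : ℝ) ≤ k ! := mod_cast k.factorial_pos
  have hgap : ((k + 2) * k ! + 1 : ℝ) ≤ (k + 3) * (k + 1)! := by
    rw [Nat.factorial_succ]
    push_cast
    nlinarith [mul_nonneg (by positivity : (0 : ℝ) ≤ k ^ 2 + 3 * k) (zero_le_one.trans hk)]
  rw [plateauB_eq, plateauA_eq]
  push_cast
  linarith [one_div_four_mul_factorial_le (k + 1), one_div_four_mul_factorial_le (k + 1 + 1)]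

theorem factorial_mul_le_plateauA_succ (k : ℕ) : (k + 1)! * (k + 3) / 4 ≤ plateauA (k + 1) := by
  have hk : (1 : ℝ) ≤ (k + 1)! := mod_cast (k + 1).factorial_pos
  rw [plateauA_eq]
  push_cast
  nlinarith [one_div_four_mul_factorial_le (k + 1 + 1), (k.cast_nonneg : (0 : ℝ) ≤ k)]

theorem plateauA_succ_pos (k : ℕ) : 0 < plateauA (k + 1) :=
  lt_of_lt_of_le (by positivity) (factorial_mul_le_plateauA_succ k)

theorem tendsto_plateauA_succ : Tendsto (fun k => plateauA (k + 1)) atTop atTop := by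
  refine tendsto_atTop_mono (fun k => ?_)
    ((tendsto_natCast_atTop_atTop.atTop_add (tendsto_const_nhds (x := (3 : ℝ)))).atTop_div_const
      (by norm_num : (0 : ℝ) < 4))
  have hk : (1 : ℝ) ≤ (k + 1)! := mod_cast (k + 1).factorial_pos
  calc ((k : ℝ) + 3) / 4 ≤ (k + 1)! * (k + 3) / 4 := by
        gcongr
        exact le_mul_of_one_le_left (by positivity) hk
    _ ≤ plateauA (k + 1) := factorial_mul_le_plateauA_succ k

theorem div_rpow_plateauA_succ_le {p y : ℝ} (hp : 0 ≤ p) (k : ℕ) (hy : y ≤ ((k + 1)! : ℝ) ^ p) :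
    y / plateauA (k + 1) ^ p ≤ (4 / (k + 3)) ^ p := by
  have hA := plateauA_succ_pos k
  calc y / plateauA (k + 1) ^ p ≤ (k + 1)! ^ p / plateauA (k + 1) ^ p := by gcongr
    _ = ((k + 1)! / plateauA (k + 1)) ^ p := (Real.div_rpow (by positivity) hA.le p).symm
    _ ≤ (4 / (k + 3)) ^ p := by
      refine Real.rpow_le_rpow (by positivity) ?_ hp
      rw [div_le_div_iff₀ hA (by positivity)]
      linarith [factorial_mul_le_plateauA_succ k]

theorem tendsto_four_div_rpow {p : ℝ} (hp : 0 < p) :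
    Tendsto (fun k : ℕ => (4 / ((k : ℝ) + 3)) ^ p) atTop (𝓝 0) := by
  have h : Tendsto (fun k : ℕ => 4 / ((k : ℝ) + 3)) atTop (𝓝 0) :=
    tendsto_const_nhds.div_atTop (tendsto_natCast_atTop_atTop.atTop_add tendsto_const_nhds)
  simpa [Real.zero_rpow hp.ne'] using h.rpow_const (Or.inr hp.le)

theorem plateau_liminf_zero_general (p : ℝ) (hp : 1 < p)
    (a b : ℕ → ℝ) (F : ℝ → ℝ)
    (ha : ∀ k, a k = (2 * (k.factorial : ℝ) * ((k + 2).factorial : ℝ) - 1) /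
        (4 * ((k + 1).factorial : ℝ)))
    (hb : ∀ k, b k = (2 * (k.factorial : ℝ) * ((k + 2).factorial : ℝ) + 1) /
        (4 * ((k + 1).factorial : ℝ)))
    (hFnonneg : ∀ t, 0 ≤ t → 0 ≤ F t)
    (hFplateau : ∀ k, 1 ≤ k → ∀ t ∈ Set.Icc (b k) (a (k + 1)),
        F t = (((k + 1).factorial : ℝ)) ^ p - 2 ^ p) :
    Filter.liminf (fun t : ℝ => F t / t ^ p) atTop = 0 := by
  obtain rfl : a = plateauA := funext ha
  obtain rfl : b = plateauB := funext hb
  have hp0 : 0 < p := zero_lt_one.trans hp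
  have hnonneg : ∀ᶠ t in atTop, 0 ≤ F t / t ^ p := by
    filter_upwards [eventually_ge_atTop 0] with t ht
    exact div_nonneg (hFnonneg t ht) (Real.rpow_nonneg ht p)
  refine liminf_eq_zero_of_tendsto_comp hnonneg tendsto_plateauA_succ
    (squeeze_zero' (tendsto_plateauA_succ.eventually hnonneg) ?_ (tendsto_four_div_rpow hp0))
  filter_upwards [eventually_ge_atTop 1] with k hk
  refine div_rpow_plateauA_succ_le hp0.le k ?_
  rw [hFplateau k hk _ ⟨plateauB_le_plateauA_succ k, le_rfl⟩]
  exact sub_le_self _ (Real.rpow_nonneg zero_le_two p)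

/-- If `F : [0,∞) → [0,∞)` is nondecreasing and constantly equal to `(k+1)!^p − 2^p`
on each interval `[b_k, a_{k+1}]` (with `a_k, b_k` the factorial intervals of the
example), then `liminf_{t→∞} F(t)/t^p = 0`. -/
theorem plateau_liminf_zero (p : ℝ) (hp : 1 < p)
    (a b : ℕ → ℝ) (F : ℝ → ℝ)
    (ha : ∀ k, a k = (2 * (k.factorial : ℝ) * ((k + 2).factorial : ℝ) - 1) /
        (4 * ((k + 1).factorial : ℝ)))
    (hb : ∀ k, b k = (2 * (k.factorial : ℝ) * ((k + 2).factorial : ℝ) + 1) /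
        (4 * ((k + 1).factorial : ℝ)))
    (hFnonneg : ∀ t, 0 ≤ t → 0 ≤ F t)
    (hFmono : ∀ t₁ t₂, 0 ≤ t₁ → t₁ ≤ t₂ → F t₁ ≤ F t₂)
    (hFplateau : ∀ k, 1 ≤ k → ∀ t ∈ Set.Icc (b k) (a (k + 1)),
        F t = (((k + 1).factorial : ℝ)) ^ p - 2 ^ p) :
    Filter.liminf (fun t : ℝ => F t / t ^ p) atTop = 0 :=
  plateau_liminf_zero_general p hp a b F ha hb hFnonneg hFplateau
end
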